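/- Let J > 0, h > 0, let R₀ ∈ SO(3), and let ω, M ∈ ℝ³ satisfy h² ‖ω + (h/(2J)) M‖² < 1. Define the incremental rescaled-Rodrigues vector Δα := (2h/(1 + √(1 − h²‖ω + (h/(2J))M‖²))) R₀ (ω + (h/(2J)) M) and set R₁ := R(Δα) R₀. Then the discrete Legendre (angular momentum) equation holds: (1/h)[R₀ᵀ R₁ (J/2) − (J/2) R₁ᵀ R₀] − (h/2) S(M) = S(J ω). In other words, Δα is an explicit closed-form solution of the implicit equation h(Jω + (h/2)M) = 4J R₀ᵀ Δα/(4 + ‖Δα‖²). -/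

import Mathlib

open Matrix

noncomputable section

/-- Vectors in ℝ³ with the Euclidean norm. -/
abbrev V3 : Type := EuclideanSpace ℝ (Fin 3)

/-- 3×3 real matrices. -/
abbrev M3 : Type := Matrix (Fin 3) (Fin 3) ℝ

/-- Cross-product (skew-symmetric) matrix of a vector: `S a *ᵥ v = a ×₃ v`. -/
def S (a : V3) : M3 := !![0, -a 2, a 1; a 2, 0, -a 0; -a 1, a 0, 0]

/-- Rescaled-Rodrigues rotation matrix `R(α) = I + (4/(4+‖α‖²))(S(α) + (1/2)S(α)²)`. -/
def Rot (α : V3) : M3 := 1 + (4 / (4 + ‖α‖ ^ 2)) • (S α + (1 / 2 : ℝ) • (S α * S α))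

/-- Action of a matrix on a vector. -/
def mulV (A : M3) (v : V3) : V3 := WithLp.toLp 2 (A.mulVec v)

/-! The skew part of `Rot α` is `(8 / (4 + ‖α‖²)) • S α`, and `Aᵀ * S (A w) * A = det A • S w` for
every 3×3 matrix `A`, so for `R₀ ∈ SO(3)` and `Δα = c • R₀ u` the skew part of `R₀ᵀ R₁` is
`(8c / (4 + c²‖u‖²)) • S u`, while `‖Δα‖ = c ‖u‖`. Both identities therefore reduce to the scalar
equation `4c / (4 + c²‖u‖²) = h`, which the explicit `c = 2h / (1 + √(1 - h²‖u‖²))` solves. -/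

lemma S_smul (c : ℝ) (a : V3) : S (c • a) = c • S a := by
  ext i j; fin_cases i <;> fin_cases j <;> simp [S]

lemma S_add (a b : V3) : S (a + b) = S a + S b := by
  ext i j; fin_cases i <;> fin_cases j <;> simp [S] <;> ring

lemma S_transpose (a : V3) : (S a)ᵀ = -S a := by
  ext i j; fin_cases i <;> fin_cases j <;> simp [S]

lemma transpose_mul_S_mulV_mul (A : M3) (w : V3) : Aᵀ * S (mulV A w) * A = A.det • S w := by
  ext i j
  fin_cases i <;> fin_cases j <;>
    simp [S, mulV, mul_apply, Fin.sum_univ_three, det_fin_three, mulVec, dotProduct] <;> ring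

lemma mulV_smul (A : M3) (c : ℝ) (v : V3) : mulV A (c • v) = c • mulV A v := by
  simp [mulV, mulVec_smul]

lemma mulV_mulV (A B : M3) (v : V3) : mulV A (mulV B v) = mulV (A * B) v := by
  simp [mulV, mulVec_mulVec]

lemma mulV_one (v : V3) : mulV 1 v = v := by
  simp [mulV]

lemma norm_mulV_of_transpose_mul_self (Q : M3) (hQ : Qᵀ * Q = 1) (v : V3) :
    ‖mulV Q v‖ = ‖v‖ := by
  have norm_sq (x : V3) : ‖x‖ ^ 2 = x.ofLp ⬝ᵥ x.ofLp := by
    rw [← real_inner_self_eq_norm_sq, EuclideanSpace.inner_eq_star_dotProduct]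
    simp
  rw [← sq_eq_sq₀ (norm_nonneg _) (norm_nonneg _), norm_sq, norm_sq, mulV, WithLp.ofLp_toLp,
    dotProduct_mulVec, ← mulVec_transpose, mulVec_mulVec, hQ, one_mulVec]

lemma Rot_sub_transpose (α : V3) : Rot α - (Rot α)ᵀ = (8 / (4 + ‖α‖ ^ 2)) • S α := by
  simp only [Rot, transpose_add, transpose_one, transpose_smul, transpose_mul, S_transpose,
    neg_mul_neg]
  module

/-- `c` is the smaller root of `h t c² - 4c + 4h = 0`, written in rationalised form. -/
lemma four_mul_eq_of_eq_two_mul_div_one_add_sqrt {h t c : ℝ} (hsmall : h ^ 2 * t ≤ 1)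
    (hc : c = 2 * h / (1 + √(1 - h ^ 2 * t))) : 4 * c = h * (4 + c ^ 2 * t) := by
  have hs := Real.sq_sqrt (sub_nonneg.mpr hsmall)
  have hpos : 0 < 1 + √(1 - h ^ 2 * t) := by positivity
  rw [hc]; field_simp; linear_combination (-4 * h) * hs

/-- The explicit incremental rescaled-Rodrigues vector Δα solves the discrete
Legendre (angular momentum) equation, with J_d = (J/2)·I for a spherical body:
(1/h)[R₀ᵀ R₁ (J/2) − (J/2) R₁ᵀ R₀] − (h/2) S(M) = S(J ω), equivalently
h(Jω + (h/2)M) = 4J R₀ᵀ Δα/(4 + ‖Δα‖²). -/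
theorem stmt6 (J h : ℝ) (hJ : 0 < J) (hh : 0 < h)
    (R₀ : M3) (hR₀ : R₀ᵀ * R₀ = 1 ∧ R₀.det = 1)
    (ω M : V3) (hsmall : h ^ 2 * ‖ω + (h / (2 * J)) • M‖ ^ 2 < 1)
    (Δα : V3)
    (hΔα : Δα = (2 * h / (1 + Real.sqrt (1 - h ^ 2 * ‖ω + (h / (2 * J)) • M‖ ^ 2))) •
      mulV R₀ (ω + (h / (2 * J)) • M))
    (R₁ : M3) (hR₁ : R₁ = Rot Δα * R₀) :
    (1 / h) • ((J / 2) • (R₀ᵀ * R₁) - (J / 2) • (R₁ᵀ * R₀)) - (h / 2) • S M = S (J • ω) ∧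
    h • (J • ω + (h / 2) • M) = (4 * J / (4 + ‖Δα‖ ^ 2)) • mulV R₀ᵀ Δα := by
  obtain ⟨hR₀, hdet⟩ := hR₀
  set u := ω + (h / (2 * J)) • M with hu
  obtain ⟨c, hc⟩ : ∃ c, c = 2 * h / (1 + √(1 - h ^ 2 * ‖u‖ ^ 2)) := ⟨_, rfl⟩
  rw [← hc] at hΔα
  have hnorm : ‖Δα‖ ^ 2 = c ^ 2 * ‖u‖ ^ 2 := by
    rw [hΔα, norm_smul, mul_pow, norm_mulV_of_transpose_mul_self R₀ hR₀, Real.norm_eq_abs, sq_abs]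
  have hback : mulV R₀ᵀ Δα = c • u := by
    rw [hΔα, mulV_smul, mulV_mulV, hR₀, mulV_one]
  have hscale : 4 / (4 + ‖Δα‖ ^ 2) * c = h := by
    rw [hnorm, div_mul_eq_mul_div, div_eq_iff (by positivity),
      four_mul_eq_of_eq_two_mul_div_one_add_sqrt hsmall.le hc]
  have hconj : R₀ᵀ * S Δα * R₀ = c • S u := by
    rw [hΔα, S_smul, Matrix.mul_smul, Matrix.smul_mul, transpose_mul_S_mulV_mul, hdet, one_smul]
  have hskew : R₀ᵀ * R₁ - R₁ᵀ * R₀ = (2 * h) • S u := by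
    rw [hR₁, transpose_mul, ← mul_assoc, ← Matrix.sub_mul, ← Matrix.mul_sub,
      Rot_sub_transpose, Matrix.mul_smul, Matrix.smul_mul, hconj, smul_smul]
    congr 1
    linear_combination 2 * hscale
  constructor
  · rw [← smul_sub, hskew, smul_smul, smul_smul, hu, S_add, S_smul, S_smul]
    match_scalars
    · field_simp
    · field_simp; ring
  · rw [hback, smul_smul, show 4 * J / (4 + ‖Δα‖ ^ 2) * c = J * h by rw [← hscale]; ring, hu]
    match_scalars <;> field_simp
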